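/- arXiv:1012.2223 — 3 statements merged into one kernel-verified Lean document; each statement's English description precedes it below -/
import Mathlib

section
/- For every q ≥ p ≥ 1 and α ∈ (0, p/q), and every r ≥ 0, β(q,r) ≤ 2^{1−α}·(β(p,r))^{α}·(γ_{pq(1−α)/(p−qα)})^{1−α}. -/
/-!
Write `Y = X(k) - E[X(k) | F_{k-r,k+r}]` and choose `θ` with `1/q = α/p + (1-α)/θ`, which is the
exponent `pq(1-α)/(p-qα)` of the statement; `q ≥ p` gives `θ ≥ q ≥ 1`. Hölder's inequality applied
to `|Y| = |Y|^α |Y|^{1-α}` gives `‖Y‖_q ≤ ‖Y‖_p^α ‖Y‖_θ^{1-α}`. Conditional expectation is a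
contraction of `L^θ`, so `‖Y‖_θ ≤ 2 ‖X(k)‖_θ`, and `‖X(k)‖_θ = γ_θ` because `X(k)` has law `μ`.
-/

open MeasureTheory
open scoped ENNReal

namespace MeasureTheory

variable {α E : Type*} {m m0 : MeasurableSpace α} {μ : Measure α} [NormedAddCommGroup E]

theorem eLpNorm_le_eLpNorm_rpow_mul_eLpNorm_rpow {f : α → E} (hf : AEStronglyMeasurable f μ)
    {p q r t : ℝ} (hp : 0 < p) (hr : 0 < r) (ht₀ : 0 < t) (ht₁ : t < 1)
    (hq : 1 / q = t / p + (1 - t) / r) :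
    eLpNorm f (.ofReal q) μ ≤ eLpNorm f (.ofReal p) μ ^ t * eLpNorm f (.ofReal r) μ ^ (1 - t) := by
  have ht₁' : 0 < 1 - t := sub_pos.2 ht₁
  have hsplit : ∀ x, ‖f x‖ = ‖f x‖ ^ t * ‖f x‖ ^ (1 - t) := fun x => by
    rw [← Real.rpow_add' (norm_nonneg _) (by simp), add_sub_cancel, Real.rpow_one]
  have : ENNReal.HolderTriple (.ofReal (p / t)) (.ofReal (r / (1 - t))) (.ofReal q) := by
    have hq₀ : 0 < q := one_div_pos.1 (hq ▸ by positivity)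
    refine ⟨?_⟩
    rw [← ENNReal.ofReal_inv_of_pos (by positivity), ← ENNReal.ofReal_inv_of_pos (by positivity),
      ← ENNReal.ofReal_inv_of_pos hq₀, ← ENNReal.ofReal_add (by positivity) (by positivity),
      inv_div, inv_div, ← one_div, hq]
  calc eLpNorm f (.ofReal q) μ
      = eLpNorm (fun x => ‖f x‖ ^ t * ‖f x‖ ^ (1 - t)) (.ofReal q) μ := by
        rw [← eLpNorm_norm f]; simp_rw [← hsplit]
    _ ≤ 1 * eLpNorm (fun x => ‖f x‖ ^ t) (.ofReal (p / t)) μ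
          * eLpNorm (fun x => ‖f x‖ ^ (1 - t)) (.ofReal (r / (1 - t))) μ :=
        eLpNorm_le_eLpNorm_mul_eLpNorm_of_nnnorm
          ((Real.continuous_rpow_const ht₀.le).comp_aestronglyMeasurable hf.norm)
          ((Real.continuous_rpow_const ht₁'.le).comp_aestronglyMeasurable hf.norm) (· * ·) 1
          (ae_of_all _ fun x => by simp [nnnorm_mul])
    _ = eLpNorm f (.ofReal p) μ ^ t * eLpNorm f (.ofReal r) μ ^ (1 - t) := by
        rw [one_mul, eLpNorm_norm_rpow _ ht₀, eLpNorm_norm_rpow _ ht₁',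
          ← ENNReal.ofReal_mul (by positivity), ← ENNReal.ofReal_mul (by positivity),
          div_mul_cancel₀ _ ht₀.ne', div_mul_cancel₀ _ ht₁'.ne']

theorem eLpNorm_sub_condExp_le [NormedSpace ℝ E] [CompleteSpace E] {f : α → E}
    (hf : AEStronglyMeasurable f μ) {p : ℝ≥0∞} (hp : 1 ≤ p) :
    eLpNorm (f - μ[f|m]) p μ ≤ 2 * eLpNorm f p μ :=
  calc eLpNorm (f - μ[f|m]) p μ ≤ eLpNorm f p μ + eLpNorm (μ[f|m]) p μ :=
        eLpNorm_sub_le hf integrable_condExp.aestronglyMeasurable hp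
    _ ≤ eLpNorm f p μ + eLpNorm f p μ := by gcongr; exact eLpNorm_condExp_le_eLpNorm f hp
    _ = 2 * eLpNorm f p μ := (two_mul _).symm

theorem eLpNorm_sub_condExp_le_rpow_mul_rpow [NormedSpace ℝ E] [CompleteSpace E] {f : α → E}
    (hf : AEStronglyMeasurable f μ) {p q r t : ℝ} (hp : 0 < p) (hr : 1 ≤ r) (ht₀ : 0 < t)
    (ht₁ : t < 1) (hq : 1 / q = t / p + (1 - t) / r) :
    eLpNorm (f - μ[f|m]) (.ofReal q) μ
      ≤ .ofReal (2 ^ (1 - t)) * eLpNorm (f - μ[f|m]) (.ofReal p) μ ^ t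
        * eLpNorm f (.ofReal r) μ ^ (1 - t) :=
  calc eLpNorm (f - μ[f|m]) (.ofReal q) μ
      ≤ eLpNorm (f - μ[f|m]) (.ofReal p) μ ^ t * eLpNorm (f - μ[f|m]) (.ofReal r) μ ^ (1 - t) :=
        eLpNorm_le_eLpNorm_rpow_mul_eLpNorm_rpow
          (hf.sub integrable_condExp.aestronglyMeasurable) hp (by linarith) ht₀ ht₁ hq
    _ ≤ eLpNorm (f - μ[f|m]) (.ofReal p) μ ^ t * (2 * eLpNorm f (.ofReal r) μ) ^ (1 - t) := by
        gcongr
        exact eLpNorm_sub_condExp_le hf (by simpa using hr)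
    _ = _ := by
        rw [ENNReal.mul_rpow_of_nonneg _ _ (by linarith), ← ENNReal.ofReal_rpow_of_pos two_pos,
          ENNReal.ofReal_ofNat]
        ring

theorem eLpNorm_eq_lintegral_rpow_of_map_eq [MeasurableSpace E] [OpensMeasurableSpace E]
    {X : α → E} (hX : AEMeasurable X μ) {ν : Measure E} (hν : μ.map X = ν) {p : ℝ} (hp : 0 < p) :
    eLpNorm X (.ofReal p) μ = (∫⁻ x, (‖x‖₊ : ℝ≥0∞) ^ p ∂ν) ^ (1 / p) := by
  rw [eLpNorm_eq_lintegral_rpow_enorm_toReal (by simpa using hp) ENNReal.ofReal_ne_top,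
    ENNReal.toReal_ofReal hp.le, ← hν, lintegral_map' (by fun_prop) hX]
  rfl

end MeasureTheory

theorem beta_interpolation_general {Ω : Type*} [mΩ : MeasurableSpace Ω]
    (P : Measure Ω)
    (℘ : ℕ)
    -- the nested family of σ-algebras `F_{s,t}`, indexed by extended reals
    (𝓕 : EReal → EReal → MeasurableSpace Ω)
    -- the ℝ^℘-valued process, identically distributed with law μ
    (X : ℕ → Ω → EuclideanSpace ℝ (Fin ℘))
    (hXmeas : ∀ k, Measurable (X k))
    (μ : Measure (EuclideanSpace ℝ (Fin ℘)))
    (hXμ : ∀ k, Measure.map (X k) P = μ)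
    (p q α : ℝ) (hp : 1 ≤ p) (hpq : p ≤ q) (hα : α ∈ Set.Ioo 0 (p / q)) (r : ℕ) :
    (⨆ k : ℕ, eLpNorm
        (fun ω => X k ω -
          (P[X k | 𝓕 (((k : ℝ) - (r : ℝ) : ℝ) : EReal) (((k : ℝ) + (r : ℝ) : ℝ) : EReal)]) ω)
        (ENNReal.ofReal q) P)
      ≤ ENNReal.ofReal (2 ^ (1 - α))
        * (⨆ k : ℕ, eLpNorm
            (fun ω => X k ω -
              (P[X k | 𝓕 (((k : ℝ) - (r : ℝ) : ℝ) : EReal) (((k : ℝ) + (r : ℝ) : ℝ) : EReal)]) ω)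
            (ENNReal.ofReal p) P) ^ α
        * ((∫⁻ x, (‖x‖₊ : ℝ≥0∞) ^ (p * q * (1 - α) / (p - q * α)) ∂μ)
            ^ (1 / (p * q * (1 - α) / (p - q * α)))) ^ (1 - α) := by
  obtain ⟨hα₀, hαpq⟩ := hα
  have hq₀ : 0 < q := by linarith
  have hα₁ : α < 1 := hαpq.trans_le ((div_le_one hq₀).2 hpq)
  have hqα : q * α < p := by rwa [lt_div_iff₀ hq₀, mul_comm] at hαpq
  set θ := p * q * (1 - α) / (p - q * α) with hθ
  have hθ₁ : 1 ≤ θ := by rw [hθ, le_div_iff₀ (by linarith)]; nlinarith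
  have hexp : 1 / q = α / p + (1 - α) / θ := by
    rw [hθ]; field_simp [(by linarith : 1 - α ≠ 0), (by linarith : p - q * α ≠ 0)]; ring
  refine iSup_le fun k => ?_
  refine (eLpNorm_sub_condExp_le_rpow_mul_rpow (hXmeas k).aestronglyMeasurable
    (by linarith) hθ₁ hα₀ hα₁ hexp).trans ?_
  rw [eLpNorm_eq_lintegral_rpow_of_map_eq (hXmeas k).aemeasurable (hXμ k) (by linarith)]
  gcongr
  exact le_iSup_of_le k le_rfl

/-- For every `q ≥ p ≥ 1` and `α ∈ (0, p/q)` and every `r ≥ 0`,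
`β(q,r) ≤ 2^{1−α} · β(p,r)^α · γ_{pq(1−α)/(p−qα)}^{1−α}`, where
`β(p,r) = sup_{k≥0} ‖X(k) − E[X(k)|F_{k−r,k+r}]‖_{L^p(P)}` and
`γ_θ = (∫|x|^θ dμ)^{1/θ}`. -/
theorem beta_interpolation {Ω : Type*} [mΩ : MeasurableSpace Ω]
    (P : Measure Ω) [IsProbabilityMeasure P]
    (℘ : ℕ)
    -- the nested family of σ-algebras `F_{s,t}`, indexed by extended reals
    (𝓕 : EReal → EReal → MeasurableSpace Ω)
    (h𝓕mono : ∀ s t s' t' : EReal, s' ≤ s → t ≤ t' → 𝓕 s t ≤ 𝓕 s' t')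
    (h𝓕le : ∀ s t : EReal, 𝓕 s t ≤ mΩ)
    -- the ℝ^℘-valued process, identically distributed with law μ
    (X : ℕ → Ω → EuclideanSpace ℝ (Fin ℘))
    (hXmeas : ∀ k, Measurable (X k))
    (μ : Measure (EuclideanSpace ℝ (Fin ℘)))
    (hXμ : ∀ k, Measure.map (X k) P = μ)
    (p q α : ℝ) (hp : 1 ≤ p) (hpq : p ≤ q) (hα : α ∈ Set.Ioo 0 (p / q)) (r : ℕ) :
    (⨆ k : ℕ, eLpNorm
        (fun ω => X k ω -
          (P[X k | 𝓕 (((k : ℝ) - (r : ℝ) : ℝ) : EReal) (((k : ℝ) + (r : ℝ) : ℝ) : EReal)]) ω)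
        (ENNReal.ofReal q) P)
      ≤ ENNReal.ofReal (2 ^ (1 - α))
        * (⨆ k : ℕ, eLpNorm
            (fun ω => X k ω -
              (P[X k | 𝓕 (((k : ℝ) - (r : ℝ) : ℝ) : EReal) (((k : ℝ) + (r : ℝ) : ℝ) : EReal)]) ω)
            (ENNReal.ofReal p) P) ^ α
        * ((∫⁻ x, (‖x‖₊ : ℝ≥0∞) ^ (p * q * (1 - α) / (p - q * α)) ∂μ)
            ^ (1 / (p * q * (1 - α) / (p - q * α)))) ^ (1 - α) :=
  beta_interpolation_general (mΩ := mΩ) P ℘ 𝓕 X hXmeas μ hXμ p q α hp hpq hα r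
end

section
/- Let f(x,ω) be a jointly measurable function of x ∈ ℝ^d and ω such that for almost all ω, |f(x,ω) − f(y,ω)| ≤ H(ω)(1+|x|^h+|y|^h)|x−y|^δ for all x,y, where H is a nonnegative random variable. Let X, Y be ℝ^d-valued random vectors with ‖X‖_{L^m} ≤ γ_m and ‖Y‖_{L^m} ≤ γ_m. If 1/a ≥ 1/p + h/m + δ/q, then ‖f(X(ω),ω) − f(Y(ω),ω)‖_{L^a} ≤ (1+2γ_m^h)·‖H‖_{L^p}·‖X−Y‖_{L^q}^{δ}. -/
/-!
Almost surely `|f(X,ω) - f(Y,ω)| ≤ H · (1 + ‖X‖ ^ h + ‖Y‖ ^ h) · ‖X - Y‖ ^ δ`. The three factors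
are measured in `L^p`, `L^(m/h)` and `L^(q/δ)`: by Minkowski and `‖‖X‖ ^ h‖_{m/h} = ‖X‖_m ^ h` the
middle one has norm at most `1 + 2 γ_m ^ h`, and `‖‖X - Y‖ ^ δ‖_{q/δ} = ‖X - Y‖_q ^ δ`. Since
`1/a ≥ 1/p + h/m + δ/q`, Hölder's inequality for three factors followed by the monotonicity of
`L^r` norms on a probability space gives the bound in `L^a`.
-/

open MeasureTheory
open scoped ENNReal

section

variable {Ω E F G : Type*} [MeasurableSpace Ω] {μ : Measure Ω}
  [NormedAddCommGroup E] [NormedAddCommGroup F] [NormedAddCommGroup G]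

theorem eLpNorm_le_eLpNorm_mul_eLpNorm_of_norm_le_mul {p q r : ℝ≥0∞}
    [ENNReal.HolderTriple p q r] {u : Ω → E} {v : Ω → F} {H : Ω → ℝ}
    (hu : AEStronglyMeasurable u μ) (hv : AEStronglyMeasurable v μ)
    (huv : ∀ᵐ ω ∂μ, ‖u ω‖ ≤ H ω * ‖v ω‖) :
    eLpNorm u r μ ≤ eLpNorm H p μ * eLpNorm v q μ := by
  -- `H` need not be measurable; `φ` is a measurable substitute that is still a.e. below `‖H‖`.
  set φ : Ω → ℝ := fun ω => ‖u ω‖ / ‖v ω‖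
  have hφ : AEStronglyMeasurable φ μ :=
    (hu.norm.aemeasurable.div hv.norm.aemeasurable).aestronglyMeasurable
  have hφ_le : ∀ᵐ ω ∂μ, ‖φ ω‖ ≤ ‖H ω‖ ∧ ‖u ω‖ = φ ω * ‖v ω‖ := by
    filter_upwards [huv] with ω hω
    rcases (norm_nonneg (v ω)).eq_or_lt with hv0 | hv0
    · have hu0 : ‖u ω‖ = 0 := le_antisymm (by simpa [← hv0] using hω) (norm_nonneg _)
      simp [φ, ← hv0, hu0]
    · refine ⟨?_, (div_mul_cancel₀ _ hv0.ne').symm⟩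
      rw [Real.norm_of_nonneg (by positivity)]
      exact ((div_le_iff₀ hv0).2 hω).trans (Real.le_norm_self _)
  calc eLpNorm u r μ ≤ eLpNorm (φ • fun ω => ‖v ω‖) r μ :=
        eLpNorm_mono_ae <| hφ_le.mono fun ω hω => hω.2.le.trans (Real.le_norm_self _)
    _ ≤ eLpNorm φ p μ * eLpNorm (fun ω => ‖v ω‖) q μ := eLpNorm_smul_le_mul_eLpNorm hv.norm hφ
    _ ≤ eLpNorm H p μ * eLpNorm v q μ := by
        rw [eLpNorm_norm]
        gcongr 1
        exact eLpNorm_mono_ae <| hφ_le.mono fun ω hω => hω.1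

theorem eLpNorm_norm_rpow_div (X : Ω → E) (r : ℝ≥0∞) {h : ℝ} (hh : 0 < h) :
    eLpNorm (fun ω => ‖X ω‖ ^ h) (r / ENNReal.ofReal h) μ = eLpNorm X r μ ^ h := by
  rw [eLpNorm_norm_rpow X hh, ENNReal.div_mul_cancel (by simpa using hh) ENNReal.ofReal_ne_top]

variable [IsProbabilityMeasure μ]

theorem eLpNorm_le_eLpNorm_mul_eLpNorm_mul_eLpNorm_of_norm_le_mul_mul {s p q r : ℝ≥0∞}
    (hs : p⁻¹ + (q⁻¹ + r⁻¹) ≤ s⁻¹) {u : Ω → E} {v : Ω → F} {w : Ω → G} {H : Ω → ℝ}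
    (hu : AEStronglyMeasurable u μ) (hv : AEStronglyMeasurable v μ)
    (hw : AEStronglyMeasurable w μ) (huvw : ∀ᵐ ω ∂μ, ‖u ω‖ ≤ H ω * ‖v ω‖ * ‖w ω‖) :
    eLpNorm u s μ ≤ eLpNorm H p μ * eLpNorm v q μ * eLpNorm w r μ := by
  have := ENNReal.HolderTriple.of q r
  have := ENNReal.HolderTriple.of p (q⁻¹ + r⁻¹)⁻¹
  calc eLpNorm u s μ ≤ eLpNorm u (p⁻¹ + (q⁻¹ + r⁻¹)⁻¹⁻¹)⁻¹ μ :=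
        eLpNorm_le_eLpNorm_of_exponent_le (by rwa [inv_inv, ENNReal.le_inv_iff_le_inv]) hu
    _ ≤ eLpNorm H p μ * eLpNorm (fun ω => ‖v ω‖ * ‖w ω‖) (q⁻¹ + r⁻¹)⁻¹ μ := by
        refine eLpNorm_le_eLpNorm_mul_eLpNorm_of_norm_le_mul hu (hv.norm.mul hw.norm) ?_
        filter_upwards [huvw] with ω hω
        rwa [norm_mul, norm_norm, norm_norm, ← mul_assoc]
    _ ≤ eLpNorm H p μ * (eLpNorm v q μ * eLpNorm w r μ) := by
        gcongr
        simpa using eLpNorm_le_eLpNorm_mul_eLpNorm_of_nnnorm hv hw (fun x y => ‖x‖ * ‖y‖) 1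
          (.of_forall fun _ => by simp)
    _ = eLpNorm H p μ * eLpNorm v q μ * eLpNorm w r μ := (mul_assoc ..).symm

theorem eLpNorm_norm_rpow_le {X : Ω → E} {m h γ : ℝ} (hh : 0 ≤ h) (hγ : 0 ≤ γ)
    (hX : eLpNorm X (ENNReal.ofReal m) μ ≤ ENNReal.ofReal γ) :
    eLpNorm (fun ω => ‖X ω‖ ^ h) (ENNReal.ofReal m / ENNReal.ofReal h) μ ≤
      ENNReal.ofReal (γ ^ h) := by
  rcases hh.eq_or_lt with rfl | hh
  -- for `h = 0` the exponent is `ofReal m / 0 = ∞` (or `0` if `m ≤ 0`) and the function is `1`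
  · simpa using eLpNorm_le_of_ae_bound (μ := μ) (p := ENNReal.ofReal m / 0)
      (f := fun _ : Ω => (1 : ℝ)) (C := 1) (by simp)
  · rw [eLpNorm_norm_rpow_div X _ hh, ← ENNReal.ofReal_rpow_of_nonneg hγ hh.le]
    gcongr

theorem eLpNorm_one_add_norm_rpow_add_norm_rpow_le {X Y : Ω → E}
    (hX : AEStronglyMeasurable X μ) (hY : AEStronglyMeasurable Y μ) {m h γ : ℝ}
    (hh : 0 ≤ h) (hmh : 1 ≤ ENNReal.ofReal m / ENNReal.ofReal h) (hγ : 0 ≤ γ)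
    (hXm : eLpNorm X (ENNReal.ofReal m) μ ≤ ENNReal.ofReal γ)
    (hYm : eLpNorm Y (ENNReal.ofReal m) μ ≤ ENNReal.ofReal γ) :
    eLpNorm (fun ω => 1 + ‖X ω‖ ^ h + ‖Y ω‖ ^ h) (ENNReal.ofReal m / ENNReal.ofReal h) μ ≤
      ENNReal.ofReal (1 + 2 * γ ^ h) := by
  set r := ENNReal.ofReal m / ENNReal.ofReal h
  have hpow : ∀ {Z : Ω → E}, AEStronglyMeasurable Z μ →
      AEStronglyMeasurable (fun ω => ‖Z ω‖ ^ h) μ := fun hZ =>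
    (hZ.norm.aemeasurable.pow_const h).aestronglyMeasurable
  have hone : eLpNorm (fun _ : Ω => (1 : ℝ)) r μ ≤ 1 := by
    simpa using eLpNorm_le_of_ae_bound (μ := μ) (p := r) (f := fun _ : Ω => (1 : ℝ)) (C := 1)
      (by simp)
  calc _ ≤ eLpNorm (fun _ : Ω => (1 : ℝ)) r μ + eLpNorm (fun ω => ‖X ω‖ ^ h) r μ
        + eLpNorm (fun ω => ‖Y ω‖ ^ h) r μ :=
        (eLpNorm_add_le (aestronglyMeasurable_const.add (hpow hX)) (hpow hY) hmh).trans
          (add_le_add_left (eLpNorm_add_le aestronglyMeasurable_const (hpow hX) hmh) _)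
    _ ≤ 1 + ENNReal.ofReal (γ ^ h) + ENNReal.ofReal (γ ^ h) := by
        gcongr
        exacts [eLpNorm_norm_rpow_le hh hγ hXm, eLpNorm_norm_rpow_le hh hγ hYm]
    _ = ENNReal.ofReal (1 + 2 * γ ^ h) := by
        have : 0 ≤ γ ^ h := Real.rpow_nonneg hγ h
        rw [two_mul, ← add_assoc, ENNReal.ofReal_add (by positivity) this,
          ENNReal.ofReal_add zero_le_one this, ENNReal.ofReal_one]

end

theorem holder_composition_general {Ω : Type*} [MeasurableSpace Ω]
    (P : Measure Ω) [IsProbabilityMeasure P]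
    (d : ℕ) (f : EuclideanSpace ℝ (Fin d) → Ω → ℝ)
    (hfmeas : Measurable (Function.uncurry f))
    (H : Ω → ℝ)
    (h δ : ℝ) (hh : 0 ≤ h) (hδ : δ ∈ Set.Ioc (0:ℝ) 1)
    (hbound : ∀ᵐ ω ∂P, ∀ x y,
      |f x ω - f y ω| ≤ H ω * (1 + ‖x‖ ^ h + ‖y‖ ^ h) * ‖x - y‖ ^ δ)
    (X Y : Ω → EuclideanSpace ℝ (Fin d)) (hX : Measurable X) (hY : Measurable Y)
    (a p q m γm : ℝ) (ha : 1 ≤ a) (hp : 1 ≤ p) (hq : 1 ≤ q) (hm : 1 ≤ m) (hγ : 0 ≤ γm)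
    (hXm : eLpNorm X (ENNReal.ofReal m) P ≤ ENNReal.ofReal γm)
    (hYm : eLpNorm Y (ENNReal.ofReal m) P ≤ ENNReal.ofReal γm)
    (hexp : 1 / p + h / m + δ / q ≤ 1 / a) :
    eLpNorm (fun ω => f (X ω) ω - f (Y ω) ω) (ENNReal.ofReal a) P ≤
      ENNReal.ofReal (1 + 2 * γm ^ h) * eLpNorm H (ENNReal.ofReal p) P
        * (eLpNorm (fun ω => X ω - Y ω) (ENNReal.ofReal q) P) ^ δ := by
  obtain ⟨hδ, -⟩ := hδ
  set r₂ := ENNReal.ofReal m / ENNReal.ofReal h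
  set r₃ := ENNReal.ofReal q / ENNReal.ofReal δ
  have hexp' : (ENNReal.ofReal p)⁻¹ + (r₂⁻¹ + r₃⁻¹) ≤ (ENNReal.ofReal a)⁻¹ := by
    have hq0 : 0 < q := by linarith
    rw [ENNReal.inv_div (.inr ENNReal.ofReal_ne_top) (.inr (ENNReal.ofReal_pos.2 (by linarith)).ne'),
      ENNReal.inv_div (.inr ENNReal.ofReal_ne_top) (.inr (by simpa using hq0)),
      ← ENNReal.ofReal_div_of_pos (by linarith), ← ENNReal.ofReal_div_of_pos hq0,
      ← ENNReal.ofReal_inv_of_pos (by linarith), ← ENNReal.ofReal_inv_of_pos (by linarith),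
      ← ENNReal.ofReal_add (by positivity) (by positivity),
      ← ENNReal.ofReal_add (by positivity) (by positivity)]
    exact ENNReal.ofReal_le_ofReal (by simpa only [one_div, add_assoc] using hexp)
  have hr₂ : 1 ≤ r₂ := ENNReal.inv_le_one.1 <|
    calc r₂⁻¹ ≤ (ENNReal.ofReal p)⁻¹ + (r₂⁻¹ + r₃⁻¹) :=
        le_self_add.trans le_add_self
      _ ≤ (ENNReal.ofReal a)⁻¹ := hexp'
      _ ≤ 1 := ENNReal.inv_le_one.2 (by simpa using ha)
  have hG : AEStronglyMeasurable (fun ω => f (X ω) ω - f (Y ω) ω) P :=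
    ((hfmeas.comp (hX.prodMk measurable_id)).sub
      (hfmeas.comp (hY.prodMk measurable_id))).aestronglyMeasurable
  calc _ ≤ eLpNorm H (ENNReal.ofReal p) P * eLpNorm (fun ω => 1 + ‖X ω‖ ^ h + ‖Y ω‖ ^ h) r₂ P
        * eLpNorm (fun ω => ‖X ω - Y ω‖ ^ δ) r₃ P := by
        refine eLpNorm_le_eLpNorm_mul_eLpNorm_mul_eLpNorm_of_norm_le_mul_mul hexp' hG
          (by fun_prop) ((hX.sub hY).norm.pow_const δ).aestronglyMeasurable ?_
        filter_upwards [hbound] with ω hω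
        rw [Real.norm_eq_abs, Real.norm_of_nonneg (by positivity),
          Real.norm_of_nonneg (by positivity)]
        exact hω (X ω) (Y ω)
    _ ≤ _ := by
        rw [eLpNorm_norm_rpow_div _ _ hδ, mul_comm (eLpNorm H _ _)]
        gcongr
        exact eLpNorm_one_add_norm_rpow_add_norm_rpow_le hX.aestronglyMeasurable
          hY.aestronglyMeasurable hh hr₂ hγ hXm hYm

/-- if `|f(x,ω) − f(y,ω)| ≤ H(ω)(1+|x|^h+|y|^h)|x−y|^δ` for a.e. `ω` and all
`x,y`, `X`, `Y` are `ℝ^d`-valued random vectors with `‖X‖_{L^m}, ‖Y‖_{L^m} ≤ γ_m`, and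
`1/a ≥ 1/p + h/m + δ/q`, then
`‖f(X(ω),ω) − f(Y(ω),ω)‖_{L^a} ≤ (1+2γ_m^h)·‖H‖_{L^p}·‖X−Y‖_{L^q}^δ`. -/
theorem holder_composition {Ω : Type*} [MeasurableSpace Ω]
    (P : Measure Ω) [IsProbabilityMeasure P]
    (d : ℕ) (f : EuclideanSpace ℝ (Fin d) → Ω → ℝ)
    (hfmeas : Measurable (Function.uncurry f))
    (H : Ω → ℝ) (hHpos : ∀ ω, 0 ≤ H ω)
    (h δ : ℝ) (hh : 0 ≤ h) (hδ : δ ∈ Set.Ioc (0:ℝ) 1)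
    (hbound : ∀ᵐ ω ∂P, ∀ x y,
      |f x ω - f y ω| ≤ H ω * (1 + ‖x‖ ^ h + ‖y‖ ^ h) * ‖x - y‖ ^ δ)
    (X Y : Ω → EuclideanSpace ℝ (Fin d)) (hX : Measurable X) (hY : Measurable Y)
    (a p q m γm : ℝ) (ha : 1 ≤ a) (hp : 1 ≤ p) (hq : 1 ≤ q) (hm : 1 ≤ m) (hγ : 0 ≤ γm)
    (hXm : eLpNorm X (ENNReal.ofReal m) P ≤ ENNReal.ofReal γm)
    (hYm : eLpNorm Y (ENNReal.ofReal m) P ≤ ENNReal.ofReal γm)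
    (hexp : 1 / p + h / m + δ / q ≤ 1 / a) :
    eLpNorm (fun ω => f (X ω) ω - f (Y ω) ω) (ENNReal.ofReal a) P ≤
      ENNReal.ofReal (1 + 2 * γm ^ h) * eLpNorm H (ENNReal.ofReal p) P
        * (eLpNorm (fun ω => X ω - Y ω) (ENNReal.ofReal q) P) ^ δ :=
  holder_composition_general P d f hfmeas H h δ hh hδ hbound X Y hX hY a p q m γm ha hp hq hm hγ hXm
    hYm hexp
end

section
/- Let μ be a probability measure on ℝ with ∫x dμ(x) = 0, ∫x² dμ(x) = 1 and ∫x⁴ dμ(x) < ∞. Let F(x,y) = x²y² − 1, so that ∫F(x,y) dμ(x)dμ(y) = 0, F_1(x) := ∫F(x,y) dμ(y) = x² − 1 and F_2(x,y) := F(x,y) − ∫F(x,z) dμ(z) = x²(y² − 1). Then: (a) ∫ F_2(x,y)·F_1(z) dμ(x)dμ(y)dμ(z) = 0; (b) ∫ F_2(x,y)·F_1(y) dμ(x)dμ(y) = ∫ (y² − 1)² dμ(y); and (c) ∫ (y² − 1)² dμ(y) > 0 unless μ({−1,1}) = 1. Consequently, in the setting of the paper's main theorem with k = ℓ = 2 and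 an i.i.d. sequence X(0), X(1), X(2), … distributed according to μ, the constant D_{2,1} = (1/2)·∫(y²−1)² dμ(y) is nonzero unless X(0)² = 1 almost surely, so the limiting Gaussian process ξ(t) = η_1(t) + η_2(2t) satisfies E[ξ(t/2)(ξ(t) − ξ(t/2))] = D_{2,1}·t/2 ≠ 0 and does not have independent increments. -/
open MeasureTheory Filter

/-!
By bilinearity, `E[ξ(t/2)(ξ(t) − ξ(t/2))]` is a signed sum of the covariances
`min(s, t)·D_{i,j}`; with `ξ(t) = η₁(t) + η₂(2t)` every term cancels except the cross term
`(t/2)·D_{2,1}`. The constant `2·D_{2,1} = ∫ (y² − 1)² dμ` is the variance of `y²`, which vanishes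
only if `y² = 1` almost surely, i.e. `μ {-1, 1} = 1`.
-/

/-- A non-integrable function has Bochner integral `0`, so `∫ x² dμ = 1` already says that the
second moment is finite. -/
theorem integrable_sq_of_integral_sq_eq_one {μ : Measure ℝ} (hvar : ∫ x, x ^ 2 ∂μ = 1) :
    Integrable (fun x : ℝ => x ^ 2) μ :=
  Integrable.of_integral_ne_zero (hvar ▸ one_ne_zero)

section SquareMoments

variable {μ : Measure ℝ} [IsProbabilityMeasure μ]

theorem integral_mul_sq_sub_one (hvar : ∫ x, x ^ 2 ∂μ = 1) (a : ℝ) :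
    ∫ y, (a * y ^ 2 - 1) ∂μ = a - 1 := by
  rw [integral_sub ((integrable_sq_of_integral_sq_eq_one hvar).const_mul a) (integrable_const 1),
    integral_const_mul, hvar]
  simp

theorem integral_sq_sub_one (hvar : ∫ x, x ^ 2 ∂μ = 1) : ∫ y, (y ^ 2 - 1) ∂μ = 0 := by
  simpa using integral_mul_sq_sub_one hvar 1

theorem integrable_sq_sub_one_sq (hvar : ∫ x, x ^ 2 ∂μ = 1)
    (hmom4 : Integrable (fun x : ℝ => x ^ 4) μ) :
    Integrable (fun y : ℝ => (y ^ 2 - 1) ^ 2) μ := by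
  have h : Integrable (fun y : ℝ => y ^ 4 - 2 * y ^ 2 + 1) μ :=
    (hmom4.sub ((integrable_sq_of_integral_sq_eq_one hvar).const_mul 2)).add (integrable_const 1)
  exact h.congr (Eventually.of_forall fun y => by ring)

theorem support_sq_sub_one_sq : Function.support (fun y : ℝ => (y ^ 2 - 1) ^ 2) = {-1, 1}ᶜ := by
  ext y
  simp [sub_eq_zero, sq_eq_one_iff, or_comm]

theorem integral_sq_sub_one_sq_pos (hint : Integrable (fun y : ℝ => (y ^ 2 - 1) ^ 2) μ)
    (hμ : μ {-1, 1} ≠ 1) : 0 < ∫ y, (y ^ 2 - 1) ^ 2 ∂μ := by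
  rw [integral_pos_iff_support_of_nonneg (fun y => sq_nonneg _) hint, support_sq_sub_one_sq,
    pos_iff_ne_zero, Ne, prob_compl_eq_zero_iff (by measurability)]
  exact hμ

end SquareMoments

section Covariance

variable {Ω : Type*} [MeasurableSpace Ω] {P : Measure Ω}

theorem integral_mul_sub_of_memLp {f g h : Ω → ℝ} (hf : MemLp f 2 P) (hg : MemLp g 2 P)
    (hh : MemLp h 2 P) :
    ∫ ω, f ω * (g ω - h ω) ∂P = ∫ ω, f ω * g ω ∂P - ∫ ω, f ω * h ω ∂P := by
  simp_rw [mul_sub]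
  exact integral_sub (hf.integrable_mul hg) (hf.integrable_mul hh)

theorem integral_add_mul_add_of_memLp {f₁ f₂ g₁ g₂ : Ω → ℝ} (hf₁ : MemLp f₁ 2 P)
    (hf₂ : MemLp f₂ 2 P) (hg₁ : MemLp g₁ 2 P) (hg₂ : MemLp g₂ 2 P) :
    ∫ ω, (f₁ ω + f₂ ω) * (g₁ ω + g₂ ω) ∂P =
      ∫ ω, f₁ ω * g₁ ω ∂P + ∫ ω, f₁ ω * g₂ ω ∂P + ∫ ω, f₂ ω * g₁ ω ∂P + ∫ ω, f₂ ω * g₂ ω ∂P := by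
  have h₁₁ : Integrable (fun ω => f₁ ω * g₁ ω) P := hf₁.integrable_mul hg₁
  have h₁₂ : Integrable (fun ω => f₁ ω * g₂ ω) P := hf₁.integrable_mul hg₂
  have h₂₁ : Integrable (fun ω => f₂ ω * g₁ ω) P := hf₂.integrable_mul hg₁
  have h₂₂ : Integrable (fun ω => f₂ ω * g₂ ω) P := hf₂.integrable_mul hg₂
  have h₁ : Integrable (fun ω => f₁ ω * g₁ ω + f₁ ω * g₂ ω) P := h₁₁.add h₁₂
  have h₂ : Integrable (fun ω => f₂ ω * g₁ ω + f₂ ω * g₂ ω) P := h₂₁.add h₂₂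
  simp_rw [add_mul, mul_add]
  rw [integral_add h₁ h₂, integral_add h₁₁ h₁₂, integral_add h₂₁ h₂₂]
  ring

theorem integral_sum_mul_sum_of_covariance {η : Fin 2 → ℝ → Ω → ℝ} {D : Fin 2 → Fin 2 → ℝ}
    (hL2 : ∀ i t, MemLp (η i t) 2 P)
    (hcov : ∀ i j : Fin 2, ∀ s t : ℝ, 0 ≤ s → 0 ≤ t →
      ∫ ω, η i s ω * η j t ω ∂P = min s t * D i j)
    {s₀ s₁ t₀ t₁ : ℝ} (hs₀ : 0 ≤ s₀) (hs₁ : 0 ≤ s₁) (ht₀ : 0 ≤ t₀) (ht₁ : 0 ≤ t₁) :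
    ∫ ω, (η 0 s₀ ω + η 1 s₁ ω) * (η 0 t₀ ω + η 1 t₁ ω) ∂P =
      min s₀ t₀ * D 0 0 + min s₀ t₁ * D 0 1 + min s₁ t₀ * D 1 0 + min s₁ t₁ * D 1 1 := by
  rw [integral_add_mul_add_of_memLp (hL2 _ _) (hL2 _ _) (hL2 _ _) (hL2 _ _),
    hcov 0 0 _ _ hs₀ ht₀, hcov 0 1 _ _ hs₀ ht₁, hcov 1 0 _ _ hs₁ ht₀, hcov 1 1 _ _ hs₁ ht₁]

end Covariance

theorem dependent_increments_example_general {Ω' : Type*} [MeasurableSpace Ω']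
    (P : Measure Ω')
    (μ : Measure ℝ) [IsProbabilityMeasure μ]
    (hvar : ∫ x, x ^ 2 ∂μ = 1)
    (hmom4 : Integrable (fun x : ℝ => x ^ 4) μ)
    (η : Fin 2 → ℝ → Ω' → ℝ) (D : Fin 2 → Fin 2 → ℝ)
    (hL2 : ∀ i t, MemLp (η i t) 2 P)
    (hcov : ∀ i j : Fin 2, ∀ s t : ℝ, 0 ≤ s → 0 ≤ t →
      ∫ ω, η i s ω * η j t ω ∂P = min s t * D i j)
    (hD21 : D 1 0 = (1 / 2) * ∫ y, (y ^ 2 - 1) ^ 2 ∂μ) :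
    -- `F₁(x) = ∫ F(x,y) dμ(y) = x² − 1`
    (∀ x : ℝ, ∫ y, (x ^ 2 * y ^ 2 - 1) ∂μ = x ^ 2 - 1)
    -- `F₂(x,y) = F(x,y) − ∫ F(x,z) dμ(z) = x²(y² − 1)`
    ∧ (∀ x y : ℝ, (x ^ 2 * y ^ 2 - 1) - ∫ z, (x ^ 2 * z ^ 2 - 1) ∂μ = x ^ 2 * (y ^ 2 - 1))
    -- (a)
    ∧ (∫ x, ∫ y, ∫ z, (x ^ 2 * (y ^ 2 - 1)) * (z ^ 2 - 1) ∂μ ∂μ ∂μ = 0)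
    -- (b)
    ∧ (∫ x, ∫ y, (x ^ 2 * (y ^ 2 - 1)) * (y ^ 2 - 1) ∂μ ∂μ = ∫ y, (y ^ 2 - 1) ^ 2 ∂μ)
    -- (c)
    ∧ (μ {-1, 1} ≠ 1 → 0 < ∫ y, (y ^ 2 - 1) ^ 2 ∂μ)
    -- consequently `E[ξ(t/2)(ξ(t)−ξ(t/2))] = D_{2,1}·t/2` for `ξ(t) = η₁(t) + η₂(2t)`
    ∧ (∀ t : ℝ, 0 ≤ t →
        ∫ ω, (η 0 (t / 2) ω + η 1 t ω) *
          ((η 0 t ω + η 1 (2 * t) ω) - (η 0 (t / 2) ω + η 1 t ω)) ∂P = D 1 0 * t / 2)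
    ∧ (μ {-1, 1} ≠ 1 → D 1 0 ≠ 0) := by
  have hpos : μ {-1, 1} ≠ 1 → 0 < ∫ y, (y ^ 2 - 1) ^ 2 ∂μ :=
    integral_sq_sub_one_sq_pos (integrable_sq_sub_one_sq hvar hmom4)
  refine ⟨fun x => integral_mul_sq_sub_one hvar _,
    fun x y => by rw [integral_mul_sq_sub_one hvar]; ring, ?_, ?_, hpos, fun t ht => ?_, fun hμ => ?_⟩
  · simp_rw [integral_const_mul, integral_sq_sub_one hvar, mul_zero, integral_zero]
  · have hinner : ∀ x : ℝ, ∫ y, (x ^ 2 * (y ^ 2 - 1)) * (y ^ 2 - 1) ∂μ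
        = x ^ 2 * ∫ y, (y ^ 2 - 1) ^ 2 ∂μ := fun x => by
      rw [← integral_const_mul]
      exact integral_congr_ae (Eventually.of_forall fun y => by ring)
    simp_rw [hinner]
    rw [integral_mul_const, hvar, one_mul]
  · have hξ : ∀ s, MemLp (fun ω => η 0 s ω + η 1 (2 * s) ω) 2 P := fun s =>
      (hL2 0 s).add (hL2 1 (2 * s))
    have hξ_half := hξ (t / 2)
    rw [show 2 * (t / 2) = t by ring] at hξ_half
    rw [integral_mul_sub_of_memLp hξ_half (hξ t) hξ_half,
      integral_sum_mul_sum_of_covariance hL2 hcov (by linarith) ht ht (by linarith),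
      integral_sum_mul_sum_of_covariance hL2 hcov (by linarith) ht (by linarith) ht,
      min_eq_left (by linarith : t / 2 ≤ t), min_eq_left (by linarith : t / 2 ≤ 2 * t),
      min_eq_left (by linarith : t ≤ 2 * t), min_eq_right (by linarith : t / 2 ≤ t),
      min_self, min_self]
    ring
  · rw [hD21]
    have := hpos hμ
    positivity

/-- the example showing the limiting process may have dependent
increments. With `μ` a probability measure on `ℝ` of mean `0`, variance `1` and finite
fourth moment, `F(x,y) = x²y² − 1`, `F₁(x) = x² − 1`, `F₂(x,y) = x²(y²−1)`:
(a) `∫F₂(x,y)F₁(z) dμdμdμ = 0`; (b) `∫F₂(x,y)F₁(y) dμdμ = ∫(y²−1)²dμ`;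
(c) `∫(y²−1)²dμ > 0` unless `μ({−1,1}) = 1`; consequently for the limiting Gaussian
process `ξ(t) = η₁(t) + η₂(2t)` with `E[η_i(s)η_j(t)] = min(s,t)D_{i,j}` and
`D_{2,1} = (1/2)∫(y²−1)²dμ`, one has `E[ξ(t/2)(ξ(t)−ξ(t/2))] = D_{2,1}·t/2`, which is
nonzero unless `μ({−1,1}) = 1`, so `ξ` does not have independent increments. -/
theorem dependent_increments_example {Ω' : Type*} [MeasurableSpace Ω']
    (P : Measure Ω') [IsProbabilityMeasure P]
    (μ : Measure ℝ) [IsProbabilityMeasure μ]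
    (hmean : ∫ x, x ∂μ = 0) (hvar : ∫ x, x ^ 2 ∂μ = 1)
    (hmom4 : Integrable (fun x : ℝ => x ^ 4) μ)
    (η : Fin 2 → ℝ → Ω' → ℝ) (D : Fin 2 → Fin 2 → ℝ)
    (hL2 : ∀ i t, MemLp (η i t) 2 P)
    (hcov : ∀ i j : Fin 2, ∀ s t : ℝ, 0 ≤ s → 0 ≤ t →
      ∫ ω, η i s ω * η j t ω ∂P = min s t * D i j)
    (hD21 : D 1 0 = (1 / 2) * ∫ y, (y ^ 2 - 1) ^ 2 ∂μ) :
    -- `F₁(x) = ∫ F(x,y) dμ(y) = x² − 1`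
    (∀ x : ℝ, ∫ y, (x ^ 2 * y ^ 2 - 1) ∂μ = x ^ 2 - 1)
    -- `F₂(x,y) = F(x,y) − ∫ F(x,z) dμ(z) = x²(y² − 1)`
    ∧ (∀ x y : ℝ, (x ^ 2 * y ^ 2 - 1) - ∫ z, (x ^ 2 * z ^ 2 - 1) ∂μ = x ^ 2 * (y ^ 2 - 1))
    -- (a)
    ∧ (∫ x, ∫ y, ∫ z, (x ^ 2 * (y ^ 2 - 1)) * (z ^ 2 - 1) ∂μ ∂μ ∂μ = 0)
    -- (b)
    ∧ (∫ x, ∫ y, (x ^ 2 * (y ^ 2 - 1)) * (y ^ 2 - 1) ∂μ ∂μ = ∫ y, (y ^ 2 - 1) ^ 2 ∂μ)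
    -- (c)
    ∧ (μ {-1, 1} ≠ 1 → 0 < ∫ y, (y ^ 2 - 1) ^ 2 ∂μ)
    -- consequently `E[ξ(t/2)(ξ(t)−ξ(t/2))] = D_{2,1}·t/2` for `ξ(t) = η₁(t) + η₂(2t)`
    ∧ (∀ t : ℝ, 0 ≤ t →
        ∫ ω, (η 0 (t / 2) ω + η 1 t ω) *
          ((η 0 t ω + η 1 (2 * t) ω) - (η 0 (t / 2) ω + η 1 t ω)) ∂P = D 1 0 * t / 2)
    ∧ (μ {-1, 1} ≠ 1 → D 1 0 ≠ 0) :=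
  dependent_increments_example_general P μ hvar hmom4 η D hL2 hcov hD21
end
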